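/- arXiv:1710.00412 — 3 statements merged into one kernel-verified Lean document; each statement's English description precedes it below -/
import Mathlib

section
/- The image of the ℤ-linear map Θ2 : ℤ[Γ²] → H_1(P_2), (γ1,γ2) ↦ class of (γ1,γ2)·∂T_2, is exactly the set of classes of closed transverse chains, i.e. the set of classes modulo N of elements of ℤ[P_2²]⁰ that lie in Σ_{j∈{0,1,2}, g∈Γ} φ_j^g(ℤ[ℙ¹(ℚ)²]). -/
open MvPolynomial

/-- `SL(2, ℤ)`. -/
abbrev SL2Z := Matrix.SpecialLinearGroup (Fin 2) ℤ

instance : Fact (Even (Fintype.card (Fin 2))) := ⟨by decide⟩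

/-- The subgroup `{±1}` of `SL(2,ℤ)`. -/
def pmOne : Subgroup SL2Z := Subgroup.zpowers (-1 : SL2Z)

instance pmOne_normal : pmOne.Normal := by
  constructor
  intro x hx g
  obtain ⟨k, rfl⟩ := Subgroup.mem_zpowers_iff.mp hx
  have hc : Commute g ((-1 : SL2Z) ^ k) := by
    refine Commute.zpow_right ?_ k
    unfold Commute SemiconjBy
    rw [mul_neg_one, neg_one_mul]
  rw [hc.eq, mul_assoc, mul_inv_cancel, mul_one]
  exact Subgroup.mem_zpowers_iff.mpr ⟨k, rfl⟩

/-- `Γ = PSL(2, ℤ) = SL(2,ℤ)/{±1}`. -/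
abbrev PSL2Z := SL2Z ⧸ pmOne

/-- `S = [[0,-1],[1,0]]` in `Γ`. -/
def pS : PSL2Z := QuotientGroup.mk ⟨!![0, -1; 1, 0], by norm_num [Matrix.det_fin_two_of]⟩

/-- `U = [[0,1],[-1,1]]` in `Γ`. -/
def pU : PSL2Z := QuotientGroup.mk ⟨!![0, 1; -1, 1], by norm_num [Matrix.det_fin_two_of]⟩

/-- `T = [[1,1],[0,1]]` in `Γ`. -/
def pT : PSL2Z := QuotientGroup.mk ⟨!![1, 1; 0, 1], by norm_num [Matrix.det_fin_two_of]⟩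

/-- The cusps `ℙ¹(ℚ) = ℚ ∪ {∞}`. -/
abbrev Cusp := OnePoint ℚ

/-- The Möbius action of `SL(2, ℤ)` on the cusps. -/
def mobiusSL (γ : SL2Z) : Cusp → Cusp := fun x =>
  match x with
  | OnePoint.infty =>
      if ((γ.1 1 0 : ℤ) : ℚ) = 0 then OnePoint.infty
      else OnePoint.some (((γ.1 0 0 : ℤ) : ℚ) / ((γ.1 1 0 : ℤ) : ℚ))
  | OnePoint.some r =>
      if ((γ.1 1 0 : ℤ) : ℚ) * r + ((γ.1 1 1 : ℤ) : ℚ) = 0 then OnePoint.infty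
      else OnePoint.some
        ((((γ.1 0 0 : ℤ) : ℚ) * r + ((γ.1 0 1 : ℤ) : ℚ)) /
          (((γ.1 1 0 : ℤ) : ℚ) * r + ((γ.1 1 1 : ℤ) : ℚ)))

lemma mobiusSL_neg (γ : SL2Z) : mobiusSL (-γ) = mobiusSL γ := by
  funext x
  cases x with
  | none =>
      simp only [mobiusSL, Matrix.SpecialLinearGroup.coe_neg, Matrix.neg_apply, Int.cast_neg,
        neg_eq_zero, neg_div_neg_eq]
  | some r =>
      simp only [mobiusSL, Matrix.SpecialLinearGroup.coe_neg, Matrix.neg_apply, Int.cast_neg,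
        neg_mul, ← neg_add, neg_eq_zero, neg_div_neg_eq]

/-- The Möbius action of `Γ = PSL(2, ℤ)` on the cusps. -/
def mobius (q : PSL2Z) : Cusp → Cusp :=
  Quotient.liftOn q mobiusSL (by
    intro a b h
    replace h : a⁻¹ * b ∈ pmOne := QuotientGroup.leftRel_apply.mp h
    obtain ⟨k, hk⟩ := Subgroup.mem_zpowers_iff.mp h
    have hb : b = a * (-1 : SL2Z) ^ k := by rw [hk, mul_inv_cancel_left]
    rcases Int.even_or_odd k with he | ho
    · rw [hb, he.neg_one_zpow, mul_one]
    · obtain ⟨m, rfl⟩ := ho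
      have h2 : ((-1 : SL2Z)) ^ (2 * m) = 1 := Even.neg_one_zpow ⟨m, by ring⟩
      rw [hb, zpow_add_one, h2, one_mul, mul_neg_one, mobiusSL_neg])

/-- The cusp `∞`. -/
def cInf : Cusp := OnePoint.infty

/-- The cusp `0`. -/
def cZero : Cusp := OnePoint.some 0

/-- Ordered pairs of cusps, the set `P_2 = ℙ¹(ℚ)²`. -/
abbrev P2 := Cusp × Cusp

/-- The boundary map `ℤ[ℙ¹(ℚ)²] → ℤ[ℙ¹(ℚ)]`, `[a,b] ↦ [b] - [a]`. -/
noncomputable def delta1 : FreeAbelianGroup (Cusp × Cusp) →+ FreeAbelianGroup Cusp :=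
  FreeAbelianGroup.lift fun p => FreeAbelianGroup.of p.2 - FreeAbelianGroup.of p.1

/-- The boundary map `ℤ[P_2²] → ℤ[P_2]`, `[x,y] ↦ [y] - [x]`. -/
noncomputable def delta2 : FreeAbelianGroup (P2 × P2) →+ FreeAbelianGroup P2 :=
  FreeAbelianGroup.lift fun p => FreeAbelianGroup.of p.2 - FreeAbelianGroup.of p.1

/-- The transverse maps `φ_j^g : ℤ[ℙ¹(ℚ)²] → ℤ[P_2²]` for `j = 0, 1, 2` :
`φ_0^g[a,b] = [(g∞,a),(g∞,b)]`, `φ_1^g[a,b] = [(a,ga),(b,gb)]`, `φ_2^g[a,b] = [(a,g0),(b,g0)]`. -/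
noncomputable def phi : Fin 3 → PSL2Z → (FreeAbelianGroup (Cusp × Cusp) →+ FreeAbelianGroup (P2 × P2)) :=
  ![fun g => FreeAbelianGroup.lift fun ab =>
      FreeAbelianGroup.of (((mobius g cInf, ab.1), (mobius g cInf, ab.2)) : P2 × P2),
    fun g => FreeAbelianGroup.lift fun ab =>
      FreeAbelianGroup.of (((ab.1, mobius g ab.1), (ab.2, mobius g ab.2)) : P2 × P2),
    fun g => FreeAbelianGroup.lift fun ab =>
      FreeAbelianGroup.of (((ab.1, mobius g cZero), (ab.2, mobius g cZero)) : P2 × P2)]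

/-- The subgroup `N = Σ_{j,g} φ_j^g(ℤ[ℙ¹(ℚ)²]⁰)` by which one quotients. -/
noncomputable def Nsub : AddSubgroup (FreeAbelianGroup (P2 × P2)) :=
  ⨆ (j : Fin 3) (g : PSL2Z), AddSubgroup.map (phi j g) (AddMonoidHom.ker delta1)

/-- `ℤ[P_2²]⁰`, the closed chains. -/
noncomputable def Ksub : AddSubgroup (FreeAbelianGroup (P2 × P2)) := AddMonoidHom.ker delta2

/-- `H_1(P_2) = ℤ[P_2²]⁰ / N`. -/
abbrev H1P2 := Ksub ⧸ (Nsub.addSubgroupOf Ksub)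

/-- The diagonal action of `(γ1,γ2) ∈ Γ²` on `P_2`. -/
def act2pt (γ : PSL2Z × PSL2Z) (p : P2) : P2 := (mobius γ.1 p.1, mobius γ.2 p.2)

/-- `(γ1,γ2)·∂T_2`, where `∂T_2 = [(0,∞),(0,0)] - [(∞,∞),(0,0)] + [(∞,∞),(0,∞)]`. -/
noncomputable def bT2 (γ : PSL2Z × PSL2Z) : FreeAbelianGroup (P2 × P2) :=
  FreeAbelianGroup.of ((act2pt γ (cZero, cInf), act2pt γ (cZero, cZero)) : P2 × P2) -
    FreeAbelianGroup.of ((act2pt γ (cInf, cInf), act2pt γ (cZero, cZero)) : P2 × P2) +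
    FreeAbelianGroup.of ((act2pt γ (cInf, cInf), act2pt γ (cZero, cInf)) : P2 × P2)

/-- The `ℤ`-linear extension of `(γ1,γ2) ↦ (γ1,γ2)·∂T_2` to `ℤ[Γ²]`. -/
noncomputable def actT2 (g : MonoidAlgebra ℤ (PSL2Z × PSL2Z)) : FreeAbelianGroup (P2 × P2) :=
  Finsupp.sum g.coeff fun γ n => n • bT2 γ

lemma delta2_bT2 (γ : PSL2Z × PSL2Z) : delta2 (bT2 γ) = 0 := by
  simp only [bT2, delta2, map_add, map_sub, FreeAbelianGroup.lift_apply_of]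
  abel

lemma actT2_mem_Ksub (g : MonoidAlgebra ℤ (PSL2Z × PSL2Z)) : actT2 g ∈ Ksub := by
  rw [Ksub, AddMonoidHom.mem_ker, actT2, map_finsuppSum]
  rw [Finsupp.sum]
  apply Finset.sum_eq_zero
  intro γ _
  rw [map_zsmul, delta2_bT2, smul_zero]

/-- The map `Θ2 : ℤ[Γ²] → H_1(P_2)`, sending `(γ1,γ2)` to the class of `(γ1,γ2)·∂T_2`. -/
noncomputable def Theta2 (g : MonoidAlgebra ℤ (PSL2Z × PSL2Z)) : H1P2 :=
  QuotientAddGroup.mk (⟨actT2 g, actT2_mem_Ksub g⟩ : Ksub)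

/-- `Σ_{j,g} φ_j^g(ℤ[ℙ¹(ℚ)²])`, the transverse chains. -/
noncomputable def Tsub : AddSubgroup (FreeAbelianGroup (P2 × P2)) :=
  ⨆ (j : Fin 3) (g : PSL2Z), (phi j g).range

/-!
Each `(γ1,γ2)·∂T_2` is a sum of transverse edges, one for each `φ_j`; this gives one inclusion.
Conversely, work modulo `Q = N + ⟨(γ1,γ2)·∂T_2⟩` and let `ψ(p)` (`potential p`) be the class of
the path `(∞,∞) → (∞,p₂) → p`, vertical then horizontal. Every transverse edge `[x,y]` is then
congruent to `ψ(y) - ψ(x)`: for horizontal edges this holds modulo `N`; for vertical ones it says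
that the two paths around any rectangle agree, which holds for Farey rectangles (two translates
of `T_2` glued along a diagonal) and then for all rectangles by Manin's continued-fraction trick;
for the edges of `φ_1^g` Manin's trick applies once more, their Farey pieces being diagonals of
translates of `T_2`. A closed transverse chain `c` is thus congruent to `ψ(∂c) = 0`, i.e. `c`
lies in `Q`, and its class is `Θ2` of the coefficients of its `∂T_2`-part.
-/

open Matrix.SpecialLinearGroup

lemma mobiusSL_eq_smul (γ : SL2Z) (x : Cusp) : mobiusSL γ x = mapGL ℚ γ • x := by
  induction x using OnePoint.rec with
  | infty => simp [mobiusSL, OnePoint.smul_infty_eq_ite]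
  | coe r => simp [mobiusSL, OnePoint.smul_some_eq_ite]

lemma mobius_mk (A : Matrix (Fin 2) (Fin 2) ℤ) (hA : A.det = 1) (x : Cusp) :
    mobius (QuotientGroup.mk ⟨A, hA⟩) x = mobiusSL ⟨A, hA⟩ x := rfl

lemma mobius_mul (g h : PSL2Z) (x : Cusp) : mobius (g * h) x = mobius g (mobius h x) := by
  induction g using QuotientGroup.induction_on with | H γ =>
  induction h using QuotientGroup.induction_on with | H δ =>
  change mobiusSL (γ * δ) x = mobiusSL γ (mobiusSL δ x)
  simp only [mobiusSL_eq_smul, map_mul, mul_smul]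

lemma mobius_inv_mul_cancel (g h : PSL2Z) (x : Cusp) :
    mobius (g * h⁻¹) (mobius h x) = mobius g x := by
  rw [← mobius_mul, inv_mul_cancel_right]

lemma mobius_pS_cInf : mobius pS cInf = cZero := by
  rw [pS, mobius_mk]
  simp [mobiusSL, cInf, cZero]

lemma mobius_pS_cZero : mobius pS cZero = cInf := by
  rw [pS, mobius_mk]
  simp [mobiusSL, cInf, cZero]

lemma mobius_mul_pS_cInf (g : PSL2Z) : mobius (g * pS) cInf = mobius g cZero := by
  rw [mobius_mul, mobius_pS_cInf]

lemma mobius_mul_pS_cZero (g : PSL2Z) : mobius (g * pS) cZero = mobius g cInf := by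
  rw [mobius_mul, mobius_pS_cZero]

lemma exists_mobius_cInf_eq (x : Cusp) : ∃ g : PSL2Z, mobius g cInf = x := by
  obtain ⟨γ, hγ⟩ := OnePoint.exists_mem_SL2 ℤ x
  exact ⟨γ, by rw [← hγ, ← mobiusSL_eq_smul]; rfl⟩

lemma exists_mobius_cZero_eq (x : Cusp) : ∃ g : PSL2Z, mobius g cZero = x := by
  obtain ⟨g, hg⟩ := exists_mobius_cInf_eq x
  exact ⟨g * pS, by rw [mobius_mul_pS_cZero, hg]⟩

/-- For `r = p/q` in lowest terms, `[[p, t], [q, s]]` with `ps ≡ 1 (mod q)` and `0 ≤ s < q`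
sends `0` to `t/s`, whose denominator is smaller (or to `∞` when `s = 0`). -/
lemma exists_mobius_cInf_eq_of_den_lt (r : ℚ) :
    ∃ g : PSL2Z, mobius g cInf = r ∧ ∀ r' : ℚ, mobius g cZero = r' → r'.den < r.den := by
  obtain ⟨u, v, huv⟩ := Rat.isCoprime_num_den r
  have hq : (0 : ℤ) < r.den := by exact_mod_cast r.den_pos
  set s := u % r.den
  set t := -(v + r.num * (u / r.den))
  have hdet : Matrix.det !![r.num, t; (r.den : ℤ), s] = 1 := by
    rw [Matrix.det_fin_two_of]
    linear_combination (r.num) * Int.emod_add_mul_ediv u r.den + huv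
  refine ⟨QuotientGroup.mk ⟨!![r.num, t; (r.den : ℤ), s], hdet⟩, ?_, fun r' hr' => ?_⟩
  · rw [mobius_mk]
    simp [mobiusSL, cInf, Rat.num_div_den]
  · rw [mobius_mk] at hr'
    simp [mobiusSL, cZero] at hr'
    have hs : s ≠ 0 := by
      rintro hs
      simp [hs] at hr'
    replace hs : 0 < s := (Int.emod_nonneg u hq.ne').lt_of_ne' hs
    rw [if_neg hs.ne', OnePoint.coe_eq_coe] at hr'
    have hden : (r'.den : ℤ) ∣ s := by
      rw [← hr', ← Rat.divInt_eq_div]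
      exact Rat.den_dvd t s
    have := Int.le_of_dvd hs hden
    have := Int.emod_lt_of_pos u hq
    omega

/-- Manin's trick: every cusp is joined to `∞` by a chain of edges `(g 0, g ∞)`. -/
theorem eq_of_forall_mobius_cZero_eq_mobius_cInf {α : Sort*} (f : Cusp → α)
    (hf : ∀ g : PSL2Z, f (mobius g cZero) = f (mobius g cInf)) (x : Cusp) : f x = f cInf := by
  induction x using OnePoint.rec with
  | infty => rfl
  | coe r =>
    induction h : r.den using Nat.strong_induction_on generalizing r with | _ n ih =>
    obtain ⟨g, hg, hlt⟩ := exists_mobius_cInf_eq_of_den_lt r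
    rw [← hg, ← hf g]
    induction hg0 : mobius g cZero using OnePoint.rec with
    | infty => rfl
    | coe r' => exact ih _ (h ▸ hlt r' hg0) r' rfl

theorem mixed_diff_eq_zero_of_farey {M : Type*} [AddCommGroup M] (F : Cusp → Cusp → M)
    (hF : ∀ g h : PSL2Z, F (mobius g cZero) (mobius h cZero) - F (mobius g cZero) (mobius h cInf)
      - F (mobius g cInf) (mobius h cZero) + F (mobius g cInf) (mobius h cInf) = 0)
    (x y : Cusp) : F x y - F x cInf - F cInf y + F cInf cInf = 0 := by
  have hx (h : PSL2Z) (x : Cusp) : F x (mobius h cZero) - F x (mobius h cInf) =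
      F cInf (mobius h cZero) - F cInf (mobius h cInf) :=
    eq_of_forall_mobius_cZero_eq_mobius_cInf (fun x => F x (mobius h cZero) - F x (mobius h cInf))
      (fun g => by rw [← sub_eq_zero, ← hF g h]; abel) x
  have hy : F x y - F cInf y = F x cInf - F cInf cInf :=
    eq_of_forall_mobius_cZero_eq_mobius_cInf (fun y => F x y - F cInf y)
      (fun h => by rw [← sub_eq_zero, ← sub_eq_zero.mpr (hx h x)]; abel) y
  rw [← sub_eq_zero.mpr hy]
  abel

open FreeAbelianGroup

lemma phi_zero_of (g : PSL2Z) (a b : Cusp) :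
    phi 0 g (of (a, b)) = of (((mobius g cInf, a), (mobius g cInf, b)) : P2 × P2) :=
  lift_apply_of _ _

lemma phi_one_of (g : PSL2Z) (a b : Cusp) :
    phi 1 g (of (a, b)) = of (((a, mobius g a), (b, mobius g b)) : P2 × P2) :=
  lift_apply_of _ _

lemma phi_two_of (g : PSL2Z) (a b : Cusp) :
    phi 2 g (of (a, b)) = of (((a, mobius g cZero), (b, mobius g cZero)) : P2 × P2) :=
  lift_apply_of _ _

lemma delta1_of (a b : Cusp) : delta1 (of (a, b)) = of b - of a := lift_apply_of _ _

lemma delta2_of (x y : P2) : delta2 (of (x, y)) = of y - of x := lift_apply_of _ _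

lemma phi_mem_Nsub (j : Fin 3) (g : PSL2Z) {u : FreeAbelianGroup (Cusp × Cusp)}
    (hu : delta1 u = 0) : phi j g u ∈ Nsub :=
  AddSubgroup.mem_iSup_of_mem j <| AddSubgroup.mem_iSup_of_mem g ⟨u, hu, rfl⟩

lemma phi_mem_Tsub (j : Fin 3) (g : PSL2Z) (u : FreeAbelianGroup (Cusp × Cusp)) :
    phi j g u ∈ Tsub :=
  AddSubgroup.mem_iSup_of_mem j <| AddSubgroup.mem_iSup_of_mem g ⟨u, rfl⟩

lemma farey_diagonal_eq_phi_one (g h : PSL2Z) :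
    of (((mobius g cInf, mobius h cInf), (mobius g cZero, mobius h cZero)) : P2 × P2) =
      phi 1 (h * g⁻¹) (of (mobius g cInf, mobius g cZero)) := by
  rw [phi_one_of, mobius_inv_mul_cancel, mobius_inv_mul_cancel]

lemma bT2_mem_Tsub (γ : PSL2Z × PSL2Z) : bT2 γ ∈ Tsub := by
  obtain ⟨g, h⟩ := γ
  have e0 := phi_zero_of (g * pS) (mobius h cInf) (mobius h cZero)
  have e2 := phi_two_of (h * pS) (mobius g cInf) (mobius g cZero)
  rw [mobius_mul_pS_cInf] at e0
  rw [mobius_mul_pS_cZero] at e2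
  simp only [bT2, act2pt]
  rw [← e0, farey_diagonal_eq_phi_one, ← e2]
  exact add_mem (sub_mem (phi_mem_Tsub 0 _ _) (phi_mem_Tsub 1 _ _)) (phi_mem_Tsub 2 _ _)

lemma closure_range_bT2_le_Tsub : AddSubgroup.closure (Set.range bT2) ≤ Tsub :=
  (AddSubgroup.closure_le _).mpr (Set.range_subset_iff.mpr bT2_mem_Tsub)

lemma range_actT2 : Set.range actT2 = AddSubgroup.closure (Set.range bT2) := by
  have h (l : PSL2Z × PSL2Z →₀ ℤ) : actT2 (.ofCoeff l) = Finsupp.linearCombination ℤ bT2 l :=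
    (Finsupp.linearCombination_apply ℤ l).symm
  rw [← Submodule.span_int_eq_addSubgroupClosure, Submodule.coe_toAddSubgroup,
    ← Finsupp.range_linearCombination, LinearMap.coe_range]
  ext c
  simp only [Set.mem_range, MonoidAlgebra.exists, h]

noncomputable def Qsub : AddSubgroup (FreeAbelianGroup (P2 × P2)) :=
  AddSubgroup.closure (Set.range bT2) ⊔ Nsub

noncomputable def piQ : FreeAbelianGroup (P2 × P2) →+ FreeAbelianGroup (P2 × P2) ⧸ Qsub :=
  QuotientAddGroup.mk' Qsub

lemma piQ_bT2 (γ : PSL2Z × PSL2Z) : piQ (bT2 γ) = 0 :=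
  (QuotientAddGroup.eq_zero_iff _).mpr <|
    AddSubgroup.mem_sup_left (AddSubgroup.subset_closure (Set.mem_range_self γ))

lemma piQ_phi_of_eq_sub (j : Fin 3) (g : PSL2Z) (a b : Cusp) :
    piQ (phi j g (of (a, b))) = piQ (phi j g (of (cInf, b))) - piQ (phi j g (of (cInf, a))) := by
  rw [← map_sub, ← map_sub, ← sub_eq_zero, ← map_sub, ← map_sub, piQ,
    QuotientAddGroup.mk'_apply, QuotientAddGroup.eq_zero_iff]
  refine AddSubgroup.mem_sup_right (phi_mem_Nsub j g ?_)
  simp only [map_sub, delta1_of]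
  abel

lemma piQ_phi_swap (j : Fin 3) (g : PSL2Z) (a b : Cusp) :
    piQ (phi j g (of (b, a))) = -piQ (phi j g (of (a, b))) := by
  rw [piQ_phi_of_eq_sub, piQ_phi_of_eq_sub j g a, neg_sub]

lemma piQ_of_self (p : P2) : piQ (of (p, p)) = 0 := by
  obtain ⟨g, hg⟩ := exists_mobius_cInf_eq p.1
  have h := piQ_phi_of_eq_sub 0 g p.2 p.2
  rw [sub_self, phi_zero_of, hg] at h
  exact h

noncomputable def vertQ (x y : Cusp) : FreeAbelianGroup (P2 × P2) ⧸ Qsub :=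
  piQ (of (((x, cInf), (x, y)) : P2 × P2))

noncomputable def horizQ (x y : Cusp) : FreeAbelianGroup (P2 × P2) ⧸ Qsub :=
  piQ (of (((cInf, y), (x, y)) : P2 × P2))

lemma piQ_vertical (x a b : Cusp) :
    piQ (of (((x, a), (x, b)) : P2 × P2)) = vertQ x b - vertQ x a := by
  obtain ⟨g, rfl⟩ := exists_mobius_cInf_eq x
  have h := piQ_phi_of_eq_sub 0 g a b
  rw [phi_zero_of, phi_zero_of, phi_zero_of] at h
  exact h

lemma piQ_horizontal (y a b : Cusp) :
    piQ (of (((a, y), (b, y)) : P2 × P2)) = horizQ b y - horizQ a y := by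
  obtain ⟨g, rfl⟩ := exists_mobius_cZero_eq y
  have h := piQ_phi_of_eq_sub 2 g a b
  rw [phi_two_of, phi_two_of, phi_two_of] at h
  exact h

lemma vertQ_cInf (x : Cusp) : vertQ x cInf = 0 := piQ_of_self _

lemma horizQ_cInf (y : Cusp) : horizQ cInf y = 0 := piQ_of_self _

lemma piQ_farey_diagonal (g h : PSL2Z) :
    piQ (of (((mobius g cInf, mobius h cInf), (mobius g cZero, mobius h cZero)) : P2 × P2)) =
      piQ (of (((mobius g cInf, mobius h cInf), (mobius g cZero, mobius h cInf)) : P2 × P2)) +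
      piQ (of (((mobius g cZero, mobius h cInf), (mobius g cZero, mobius h cZero)) : P2 × P2)) := by
  have h0 := piQ_bT2 (g, h)
  simp only [bT2, act2pt, map_add, map_sub] at h0
  rw [← sub_eq_zero, ← neg_eq_zero, ← h0]
  abel

/-- The two Farey diagonals of the square cancel: they are the images of `[a, b]` and `[b, a]`
under one `φ_1^g`. -/
lemma vertQ_sub_horizQ_farey (g h : PSL2Z) :
    (vertQ (mobius g cZero) (mobius h cZero) - horizQ (mobius g cZero) (mobius h cZero))
      - (vertQ (mobius g cZero) (mobius h cInf) - horizQ (mobius g cZero) (mobius h cInf))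
      - (vertQ (mobius g cInf) (mobius h cZero) - horizQ (mobius g cInf) (mobius h cZero))
      + (vertQ (mobius g cInf) (mobius h cInf) - horizQ (mobius g cInf) (mobius h cInf)) = 0 := by
  have hd := piQ_farey_diagonal g h
  have hd' := piQ_farey_diagonal (g * pS) (h * pS)
  have hcomp : h * pS * (g * pS)⁻¹ = h * g⁻¹ := by group
  rw [farey_diagonal_eq_phi_one] at hd
  rw [farey_diagonal_eq_phi_one, hcomp] at hd'
  simp only [mobius_mul_pS_cInf, mobius_mul_pS_cZero] at hd'
  rw [piQ_phi_swap, hd] at hd'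
  simp only [piQ_vertical, piQ_horizontal] at hd'
  rw [← neg_eq_zero, ← sub_eq_zero.mpr hd']
  abel

lemma vertQ_eq_add_horizQ_sub (x y : Cusp) :
    vertQ x y = vertQ cInf y + horizQ x y - horizQ x cInf := by
  have h := mixed_diff_eq_zero_of_farey (fun x y => vertQ x y - horizQ x y)
    vertQ_sub_horizQ_farey x y
  simp only [vertQ_cInf, horizQ_cInf] at h
  rw [← sub_eq_zero, ← h]
  abel

noncomputable def potential (p : P2) : FreeAbelianGroup (P2 × P2) ⧸ Qsub :=
  vertQ cInf p.2 + horizQ p.1 p.2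

lemma piQ_vertical_eq_potential_sub (x a b : Cusp) :
    piQ (of (((x, a), (x, b)) : P2 × P2)) = potential (x, b) - potential (x, a) := by
  rw [piQ_vertical, vertQ_eq_add_horizQ_sub x a, vertQ_eq_add_horizQ_sub x b, potential,
    potential]
  abel

lemma piQ_horizontal_eq_potential_sub (y a b : Cusp) :
    piQ (of (((a, y), (b, y)) : P2 × P2)) = potential (b, y) - potential (a, y) := by
  rw [piQ_horizontal, potential, potential]
  abel

lemma piQ_farey_diagonal_eq_potential_sub (g h : PSL2Z) :
    piQ (of (((mobius g cInf, mobius h cInf), (mobius g cZero, mobius h cZero)) : P2 × P2)) =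
      potential (mobius g cZero, mobius h cZero) - potential (mobius g cInf, mobius h cInf) := by
  rw [piQ_farey_diagonal, piQ_horizontal_eq_potential_sub, piQ_vertical_eq_potential_sub]
  abel

/-- Manin's trick applies to `c ↦ π(φ_1^g [∞, c]) - ψ(c, g c)`: its increment along a Farey edge
`(γ ∞, γ 0)` is that along a Farey diagonal. -/
lemma piQ_phi_one_of_eq_potential_sub (g : PSL2Z) (a b : Cusp) :
    piQ (phi 1 g (of (a, b))) = potential (b, mobius g b) - potential (a, mobius g a) := by
  have key (c : Cusp) : piQ (phi 1 g (of (cInf, c))) - potential (c, mobius g c) =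
      piQ (phi 1 g (of (cInf, cInf))) - potential (cInf, mobius g cInf) := by
    refine eq_of_forall_mobius_cZero_eq_mobius_cInf
      (fun c => piQ (phi 1 g (of (cInf, c))) - potential (c, mobius g c)) (fun γ => ?_) c
    have hd := piQ_farey_diagonal_eq_potential_sub γ (g * γ)
    rw [farey_diagonal_eq_phi_one, mul_inv_cancel_right, piQ_phi_of_eq_sub, mobius_mul,
      mobius_mul] at hd
    rw [← sub_eq_zero, ← sub_eq_zero.mpr hd]
    abel
  have hinf : piQ (phi 1 g (of (cInf, cInf))) = 0 := by
    rw [phi_one_of]; exact piQ_of_self _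
  rw [piQ_phi_of_eq_sub, sub_eq_iff_eq_add.mp (key a), sub_eq_iff_eq_add.mp (key b), hinf]
  abel

lemma piQ_phi_of_eq_lift_potential (j : Fin 3) (g : PSL2Z) (a b : Cusp) :
    piQ (phi j g (of (a, b))) = lift potential (delta2 (phi j g (of (a, b)))) := by
  match j with
  | 0 => rw [phi_zero_of, delta2_of, map_sub, lift_apply_of, lift_apply_of,
      piQ_vertical_eq_potential_sub]
  | 1 => rw [piQ_phi_one_of_eq_potential_sub, phi_one_of, delta2_of, map_sub, lift_apply_of,
      lift_apply_of]
  | 2 => rw [phi_two_of, delta2_of, map_sub, lift_apply_of, lift_apply_of,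
      piQ_horizontal_eq_potential_sub]

lemma piQ_eq_lift_potential_of_mem_Tsub {c : FreeAbelianGroup (P2 × P2)} (hc : c ∈ Tsub) :
    piQ c = lift potential (delta2 c) := by
  have hT : Tsub ≤ (piQ - (lift potential).comp delta2).ker :=
    iSup_le fun j => iSup_le fun g => by
      rintro _ ⟨u, rfl⟩
      rw [AddMonoidHom.mem_ker, AddMonoidHom.sub_apply, sub_eq_zero]
      exact DFunLike.congr_fun
        (lift_ext (piQ.comp (phi j g)) (((lift potential).comp delta2).comp (phi j g))
          fun ⟨a, b⟩ => piQ_phi_of_eq_lift_potential j g a b) u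
  exact sub_eq_zero.mp (hT hc)

lemma mem_Qsub_of_mem_Tsub {c : FreeAbelianGroup (P2 × P2)} (hT : c ∈ Tsub) (hK : c ∈ Ksub) :
    c ∈ Qsub := by
  rw [← QuotientAddGroup.eq_zero_iff, ← QuotientAddGroup.mk'_apply, ← piQ,
    piQ_eq_lift_potential_of_mem_Tsub hT, AddMonoidHom.mem_ker.mp hK, map_zero]

/-- The image of `Θ2 : ℤ[Γ²] → H_1(P_2)` is exactly the set of classes of closed transverse
chains, i.e. of elements of `ℤ[P_2²]⁰` lying in `Σ_{j,g} φ_j^g(ℤ[ℙ¹(ℚ)²])`. -/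
theorem range_Theta2_eq_closed_transverse_classes :
    Set.range Theta2 =
      {x : H1P2 | ∃ (c : FreeAbelianGroup (P2 × P2)) (hc : c ∈ Ksub),
        c ∈ Tsub ∧ x = QuotientAddGroup.mk (⟨c, hc⟩ : Ksub)} := by
  ext x
  constructor
  · rintro ⟨g, rfl⟩
    have hB : actT2 g ∈ (AddSubgroup.closure (Set.range bT2) : Set _) :=
      range_actT2 ▸ Set.mem_range_self g
    exact ⟨actT2 g, actT2_mem_Ksub g, closure_range_bT2_le_Tsub hB, rfl⟩
  · rintro ⟨c, hK, hT, rfl⟩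
    obtain ⟨b, hb, n, hn, rfl⟩ := AddSubgroup.mem_sup.mp (mem_Qsub_of_mem_Tsub hT hK)
    obtain ⟨g, rfl⟩ : b ∈ Set.range actT2 := range_actT2 ▸ hb
    refine ⟨g, QuotientAddGroup.eq.mpr ?_⟩
    simpa [AddSubgroup.mem_addSubgroupOf, Theta2] using hn
end

section
/- Let g = Σ λ_{α,β} (α,β) ∈ ℤ[Γ²] (a finite ℤ-linear combination of pairs). Then g belongs to the left ideal of ℤ[Γ²] generated by (1+S,1), (1+U+U²,1) and (1,1−T) if and only if for every left coset c = γ·⟨T⟩ of the cyclic subgroup ⟨T⟩ = Γ_∞ in Γ, the element Σ_{β ∈ c} λ_{α,β} α of ℤ[Γ] belongs to the left ideal of ℤ[Γ] generated by 1+S and 1+U+U². -/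
open MvPolynomial

attribute [local instance] Classical.propDecidable

/-!
The coset sum `π_γ` satisfies `π_γ((α, β) x) = α π_{β⁻¹γ}(x)`, kills `(1, 1 - T)` and sends
`(a, 1)` to `a` or `0`, so the elements all of whose coset sums lie in
`I = (1 + S, 1 + U + U²)` form a left ideal containing the generators. Conversely, modulo the
ideal, `(1, 1 - T)` moves the second coordinate of each term of `g` within its `⟨T⟩`-coset to a
fixed representative `γ`; what then lies over `γ` is `(1, γ) · (π_γ g, 1)`, which lies in the
ideal once `π_γ g ∈ I`.
-/

open MonoidAlgebra

section OneSubZpow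

variable {R M : Type*} [Ring R] [Group M]

theorem one_sub_of_mem_span_one_sub_of {t h : M} (hh : h ∈ Subgroup.zpowers t) :
    1 - of R M h ∈ Ideal.span {1 - of R M t} := by
  have one_sub_pow (n : ℕ) : 1 - of R M (t ^ n) ∈ Ideal.span {1 - of R M t} := by
    rw [map_pow, ← geom_sum_mul_neg]
    exact Ideal.mul_mem_left _ _ (Ideal.subset_span rfl)
  obtain ⟨k, rfl⟩ := hh
  obtain ⟨n, rfl | rfl⟩ := Int.eq_nat_or_neg k
  · simpa using one_sub_pow n
  · have h : 1 - of R M (t ^ (-n : ℤ)) = -of R M (t ^ (-n : ℤ)) * (1 - of R M (t ^ n)) := by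
      rw [neg_mul, mul_sub, mul_one, ← map_mul, ← zpow_natCast, ← zpow_add, neg_add_cancel,
        zpow_zero, map_one, neg_sub]
    rw [h]
    exact Ideal.mul_mem_left _ _ (one_sub_pow n)

end OneSubZpow

section CosetSum

variable {R G K : Type*} [Ring R] [Monoid G] [Group K]

/-- `cosetSum H γ (∑ λ_{α,β} (α, β)) = ∑_{β ∈ γH} λ_{α,β} α`. -/
noncomputable def cosetSum (H : Subgroup K) (γ : K) :
    MonoidAlgebra R (G × K) →+ MonoidAlgebra R G where
  toFun g := g.coeff.sum fun p n => if γ⁻¹ * p.2 ∈ H then single p.1 n else 0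
  map_zero' := Finsupp.sum_zero_index
  map_add' x y := Finsupp.sum_add_index' (by simp) fun _ _ _ => by split_ifs <;> simp [single_add]

variable (H : Subgroup K)

theorem cosetSum_apply (γ : K) (g : MonoidAlgebra R (G × K)) :
    cosetSum H γ g = g.coeff.sum fun p n => if γ⁻¹ * p.2 ∈ H then single p.1 n else 0 :=
  rfl

theorem cosetSum_eq_sum_filter (γ : K) (g : MonoidAlgebra R (G × K)) :
    cosetSum H γ g = ∑ p ∈ g.coeff.support with γ⁻¹ * p.2 ∈ H, single p.1 (g.coeff p) :=
  (Finset.sum_filter _ _).symm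

theorem cosetSum_single (γ : K) (p : G × K) (c : R) :
    cosetSum H γ (single p c) = if γ⁻¹ * p.2 ∈ H then single p.1 c else 0 := by
  rw [cosetSum_apply, coeff_single, Finsupp.sum_single_index (by simp)]

theorem cosetSum_single_mul (γ : K) (a : G) (b : K) (c : R) (x : MonoidAlgebra R (G × K)) :
    cosetSum H γ (single (a, b) c * x) = single a c * cosetSum H (b⁻¹ * γ) x := by
  induction x using induction_linear with
  | zero => simp
  | add x y hx hy => rw [mul_add, map_add, hx, hy, map_add, mul_add]
  | single p d =>
    rw [single_mul_single, cosetSum_single, cosetSum_single]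
    simp only [Prod.snd_mul, Prod.fst_mul, mul_inv_rev, inv_inv, mul_assoc]
    split_ifs <;> simp [single_mul_single]

theorem cosetSum_mul_single_of_mem (γ : K) {h : K} (hh : h ∈ H) (x : MonoidAlgebra R (G × K)) :
    cosetSum H γ (x * single (1, h) 1) = cosetSum H γ x := by
  induction x using induction_linear with
  | zero => simp
  | add x y hx hy => rw [add_mul, map_add, hx, hy, map_add]
  | single p d =>
    rw [single_mul_single, cosetSum_single, cosetSum_single]
    simp [← mul_assoc, mul_mem_cancel_right hh]

theorem cosetSum_mapDomain_inl (γ : K) (a : MonoidAlgebra R G) :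
    cosetSum H γ (mapDomainRingHom R (MonoidHom.inl G K) a) = if γ⁻¹ ∈ H then a else 0 := by
  induction a using induction_linear with
  | zero => simp
  | add a b ha hb => rw [map_add, map_add, ha, hb, ite_add_ite, add_zero]
  | single a c => simp [mapDomain_single, cosetSum_single]

end CosetSum

section Ideals

variable {R G K : Type*} [Ring R] [Monoid G] [Group K]

def cosetSumComap (H : Subgroup K) (I : Ideal (MonoidAlgebra R G)) :
    Ideal (MonoidAlgebra R (G × K)) where
  carrier := {g | ∀ γ, cosetSum H γ g ∈ I}
  add_mem' hx hy γ := by rw [map_add]; exact add_mem (hx γ) (hy γ)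
  zero_mem' γ := by rw [map_zero]; exact zero_mem I
  smul_mem' a x hx := by
    induction a using induction_linear with
    | zero => simp
    | add a b ha hb => intro γ; rw [add_smul, map_add]; exact add_mem (ha γ) (hb γ)
    | single p c => intro γ; rw [smul_eq_mul, cosetSum_single_mul]; exact I.mul_mem_left _ (hx _)

theorem span_le_cosetSumComap (s : Set (MonoidAlgebra R G)) {H : Subgroup K} {t : K}
    (ht : t ∈ H) :
    Ideal.span (mapDomainRingHom R (MonoidHom.inl G K) '' s ∪ {1 - of R (G × K) (1, t)}) ≤
      cosetSumComap H (Ideal.span s) := by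
  refine Ideal.span_le.mpr ?_
  rintro x (⟨a, ha, rfl⟩ | rfl) γ
  · rw [cosetSum_mapDomain_inl]
    split_ifs
    exacts [Ideal.subset_span ha, zero_mem _]
  · rw [map_sub, of_apply, ← cosetSum_mul_single_of_mem H γ ht 1, one_mul, sub_self]
    exact zero_mem _

theorem single_sub_single_mem_span (a : G) {b b' t : K} (hb : b⁻¹ * b' ∈ Subgroup.zpowers t)
    (c : R) :
    single (a, b) c - single (a, b') c ∈ Ideal.span {1 - of R (G × K) (1, t)} := by
  have hmem := Ideal.mem_map_of_mem (mapDomainRingHom R (MonoidHom.inr G K))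
    (one_sub_of_mem_span_one_sub_of (R := R) hb)
  rw [Ideal.map_span, Set.image_singleton] at hmem
  simp only [map_sub, map_one, of_apply, mapDomainRingHom_apply, mapDomain_single,
    MonoidHom.inr_apply] at hmem
  have h : single (a, b) c - single (a, b') c = single (a, b) c * (1 - single (1, b⁻¹ * b') 1) := by
    rw [mul_sub, mul_one, single_mul_single]
    simp
  rw [h, of_apply]
  exact Ideal.mul_mem_left _ _ hmem

theorem single_one_mul_inl_mem_span (s : Set (MonoidAlgebra R G)) (t γ : K)
    {a : MonoidAlgebra R G} (ha : a ∈ Ideal.span s) :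
    single (1, γ) 1 * mapDomainRingHom R (MonoidHom.inl G K) a ∈
      Ideal.span (mapDomainRingHom R (MonoidHom.inl G K) '' s ∪ {1 - of R (G × K) (1, t)}) := by
  refine Ideal.mul_mem_left _ _ (Ideal.span_mono Set.subset_union_left ?_)
  rw [← Ideal.map_span]
  exact Ideal.mem_map_of_mem _ ha

theorem mem_span_of_forall_cosetSum_mem (s : Set (MonoidAlgebra R G)) (t : K)
    {g : MonoidAlgebra R (G × K)}
    (hg : ∀ γ, cosetSum (Subgroup.zpowers t) γ g ∈ Ideal.span s) :
    g ∈ Ideal.span (mapDomainRingHom R (MonoidHom.inl G K) '' s ∪ {1 - of R (G × K) (1, t)}) := by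
  set H := Subgroup.zpowers t
  set J := Ideal.span (mapDomainRingHom R (MonoidHom.inl G K) '' s ∪ {1 - of R (G × K) (1, t)})
  have hcoset (q : K ⧸ H) (b : K) : q.out⁻¹ * b ∈ H ↔ (b : K ⧸ H) = q := by
    rw [← QuotientGroup.eq, QuotientGroup.out_eq', eq_comm]
  have hsplit : g = ∑ q ∈ g.coeff.support.image (fun p => (p.2 : K ⧸ H)),
      ∑ p ∈ g.coeff.support with (p.2 : K ⧸ H) = q, single p (g.coeff p) := by
    rw [Finset.sum_fiberwise_of_maps_to fun p hp => Finset.mem_image_of_mem _ hp]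
    exact (sum_coeff_single g).symm
  rw [hsplit]
  refine sum_mem fun q _ => ?_
  -- over the coset `q`, moving every second coordinate to `q.out` changes `g` only modulo `J`
  have hmove : single (1, q.out) 1 * mapDomainRingHom R (MonoidHom.inl G K) (cosetSum H q.out g) =
      ∑ p ∈ g.coeff.support with (p.2 : K ⧸ H) = q, single (p.1, q.out) (g.coeff p) := by
    simp only [cosetSum_eq_sum_filter, hcoset, map_sum, Finset.mul_sum, mapDomainRingHom_apply,
      mapDomain_single, single_mul_single, MonoidHom.inl_apply, Prod.mk_mul_mk, one_mul, mul_one]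
  have hdiff : ∑ p ∈ g.coeff.support with (p.2 : K ⧸ H) = q, single p (g.coeff p) -
      single (1, q.out) 1 * mapDomainRingHom R (MonoidHom.inl G K) (cosetSum H q.out g) ∈ J := by
    rw [hmove, ← Finset.sum_sub_distrib]
    refine sum_mem fun p hp => Ideal.span_mono Set.subset_union_right ?_
    have hp : (p.2 : K ⧸ H) = q.out := (Finset.mem_filter.mp hp).2.trans q.out_eq'.symm
    exact single_sub_single_mem_span p.1 (QuotientGroup.eq.mp hp) _
  simpa using add_mem hdiff (single_one_mul_inl_mem_span s t q.out (hg q.out))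

theorem mem_span_iff_forall_cosetSum_mem (s : Set (MonoidAlgebra R G)) (t : K)
    (g : MonoidAlgebra R (G × K)) :
    g ∈ Ideal.span (mapDomainRingHom R (MonoidHom.inl G K) '' s ∪ {1 - of R (G × K) (1, t)}) ↔
      ∀ γ, cosetSum (Subgroup.zpowers t) γ g ∈ Ideal.span s :=
  ⟨fun hg => span_le_cosetSumComap s (Subgroup.mem_zpowers t) hg,
    mem_span_of_forall_cosetSum_mem s t⟩

end Ideals

/-- `g = Σ λ_{α,β}(α,β)` lies in the left ideal of `ℤ[Γ²]` generated by `(1+S,1)`,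
`(1+U+U²,1)` and `(1,1-T)` iff for every left coset `γ⟨T⟩` of `⟨T⟩ = Γ_∞`, the element
`Σ_{β ∈ γ⟨T⟩} λ_{α,β} α` of `ℤ[Γ]` lies in the left ideal generated by `1+S` and `1+U+U²`. -/
theorem mem_IH_iff_coset_sums (g : MonoidAlgebra ℤ (PSL2Z × PSL2Z)) :
    g ∈ Ideal.span ({(1 : MonoidAlgebra ℤ (PSL2Z × PSL2Z)) +
          MonoidAlgebra.of ℤ (PSL2Z × PSL2Z) (pS, 1),
        (1 : MonoidAlgebra ℤ (PSL2Z × PSL2Z)) + MonoidAlgebra.of ℤ (PSL2Z × PSL2Z) (pU, 1) +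
          MonoidAlgebra.of ℤ (PSL2Z × PSL2Z) (pU ^ 2, 1),
        (1 : MonoidAlgebra ℤ (PSL2Z × PSL2Z)) - MonoidAlgebra.of ℤ (PSL2Z × PSL2Z) (1, pT)} :
      Set (MonoidAlgebra ℤ (PSL2Z × PSL2Z))) ↔
    ∀ γ : PSL2Z,
      (Finsupp.sum g.coeff fun p n =>
          if γ⁻¹ * p.2 ∈ Subgroup.zpowers pT then (MonoidAlgebra.single p.1 n : MonoidAlgebra ℤ PSL2Z)
          else 0) ∈
        Ideal.span ({(1 : MonoidAlgebra ℤ PSL2Z) + MonoidAlgebra.of ℤ PSL2Z pS,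
            (1 : MonoidAlgebra ℤ PSL2Z) + MonoidAlgebra.of ℤ PSL2Z pU +
              MonoidAlgebra.of ℤ PSL2Z (pU ^ 2)} : Set (MonoidAlgebra ℤ PSL2Z)) := by
  have hgens : ({1 + of ℤ (PSL2Z × PSL2Z) (pS, 1),
      1 + of ℤ (PSL2Z × PSL2Z) (pU, 1) + of ℤ (PSL2Z × PSL2Z) (pU ^ 2, 1),
      1 - of ℤ (PSL2Z × PSL2Z) (1, pT)} : Set (MonoidAlgebra ℤ (PSL2Z × PSL2Z))) =
      mapDomainRingHom ℤ (MonoidHom.inl PSL2Z PSL2Z) ''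
        {1 + of ℤ PSL2Z pS, 1 + of ℤ PSL2Z pU + of ℤ PSL2Z (pU ^ 2)} ∪
        {1 - of ℤ (PSL2Z × PSL2Z) (1, pT)} := by
    simp only [Set.image_pair, Set.insert_union, Set.singleton_union, map_add, map_one]
    simp only [of_apply, mapDomainRingHom_apply, mapDomain_single, MonoidHom.inl_apply]
  rw [hgens]
  exact mem_span_iff_forall_cosetSum_mem _ pT g
end

section
/- Let g = Σ λ_{α,β} (α,β) ∈ ℤ[Γ²] (a finite ℤ-linear combination of pairs). Then g belongs to the left ideal of ℤ[Γ²] generated by (1,1)+(S,S) and (1,1)+(U,U)+(U²,U²) if and only if for every γ ∈ Γ, the element Σ_{(α,β) : βα⁻¹ = γ} λ_{α,β} α of ℤ[Γ] belongs to the left ideal of ℤ[Γ] generated by 1+S and 1+U+U². -/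
open MvPolynomial

/-! The diagonal embedding `Δ : k[G] → k[G × G]` makes `k[G × G]` a free right `k[G]`-module with
basis `(1, γ)`, `γ ∈ G`, since `(α, β) = (1, βα⁻¹) · Δ α`. The `γ`-th coordinate of `g` is the
diagonal sum `Σ_{βα⁻¹ = γ} λ_{α,β} α`, and taking coordinates is right `k[G]`-linear. So the
coordinates of a left combination `Σ rᵢ · Δ sᵢ` are the combinations `Σ (coord rᵢ) · sᵢ`, and
conversely coordinates lying in the left ideal generated by `s` reassemble into an element of the
left ideal generated by `Δ '' s`. The generators in `ℤ[Γ²]` are the images under `Δ` of `1 + S`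
and `1 + U + U²`. -/

open scoped MonoidAlgebra

namespace MonoidAlgebra

variable {k G : Type*} [Semiring k] [Group G]

noncomputable def diag : k[G] →+* k[G × G] :=
  mapDomainRingHom k ((MonoidHom.id G).prod (MonoidHom.id G))

@[simp]
lemma diag_single (a : G) (r : k) : diag (single a r) = single (a, a) r :=
  mapDomain_single

lemma single_mul_diag_single (b a : G) (r : k) :
    single (1, b) 1 * diag (single a r) = single (a, b * a) r := by
  simp [single_mul_single]

section diagSlice

variable [DecidableEq G]

noncomputable def diagSlice (γ : G) : k[G × G] →+ k[G] where
  toFun g := g.coeff.sum fun p r => if p.2 * p.1⁻¹ = γ then single p.1 r else 0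
  map_zero' := by simp
  map_add' x y := by
    rw [coeff_add]
    exact Finsupp.sum_add_index' (by simp) fun p r₁ r₂ => by split_ifs <;> simp [single_add]

lemma diagSlice_apply (γ : G) (g : k[G × G]) :
    diagSlice γ g = g.coeff.sum fun p r => if p.2 * p.1⁻¹ = γ then single p.1 r else 0 :=
  rfl

lemma diagSlice_single (γ : G) (p : G × G) (r : k) :
    diagSlice γ (single p r) = if p.2 * p.1⁻¹ = γ then single p.1 r else 0 := by
  rw [diagSlice_apply, coeff_single, Finsupp.sum_single_index (by simp)]

lemma diagSlice_mul_diag (γ : G) (x : k[G × G]) (y : k[G]) :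
    diagSlice γ (x * diag y) = diagSlice γ x * y := by
  induction x using induction_linear with
  | zero => simp
  | add x₁ x₂ h₁ h₂ => simp only [add_mul, map_add, h₁, h₂]
  | single p r =>
    induction y using induction_linear with
    | zero => simp
    | add y₁ y₂ h₁ h₂ => simp only [mul_add, map_add, h₁, h₂]
    | single a t =>
      simp [diagSlice_single, mul_inv_rev, mul_assoc, apply_ite (· * single a t),
        single_mul_single]

lemma sum_single_mul_diag_diagSlice (g : k[G × G]) :
    ∑ γ ∈ g.coeff.support.image (fun p => p.2 * p.1⁻¹), single (1, γ) 1 * diag (diagSlice γ g)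
      = g := by
  set T := g.coeff.support.image fun p => p.2 * p.1⁻¹
  calc ∑ γ ∈ T, single (1, γ) 1 * diag (diagSlice γ g)
      = ∑ γ ∈ T, ∑ p ∈ g.coeff.support,
          if p.2 * p.1⁻¹ = γ then single p (g.coeff p) else 0 := by
        refine Finset.sum_congr rfl fun γ _ => ?_
        rw [diagSlice_apply, Finsupp.sum, map_sum, Finset.mul_sum]
        refine Finset.sum_congr rfl fun p _ => ?_
        split_ifs with h
        · rw [single_mul_diag_single, ← h, inv_mul_cancel_right]
        · rw [map_zero, mul_zero]
    _ = ∑ p ∈ g.coeff.support, single p (g.coeff p) := by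
        rw [Finset.sum_comm]
        exact Finset.sum_congr rfl fun p hp => Finset.sum_ite_eq T _ _ |>.trans
          (if_pos (Finset.mem_image_of_mem _ hp))
    _ = g := sum_coeff_single g

theorem mem_span_image_diag_iff (s : Set k[G]) (g : k[G × G]) :
    g ∈ Ideal.span (diag '' s) ↔ ∀ γ, diagSlice γ g ∈ Ideal.span s := by
  constructor
  · intro hg γ
    -- unlike the bare claim, this one is stable under left multiplication
    suffices ∀ r, diagSlice γ (r * g) ∈ Ideal.span s by simpa using this 1
    induction hg using Submodule.span_induction with
    | mem x hx =>
      obtain ⟨y, hy, rfl⟩ := hx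
      intro r
      rw [diagSlice_mul_diag]
      exact Ideal.mul_mem_left _ _ (Ideal.subset_span hy)
    | zero => simp
    | add x y _ _ hx hy =>
      intro r
      rw [mul_add, map_add]
      exact add_mem (hx r) (hy r)
    | smul a x _ hx =>
      intro r
      rw [smul_eq_mul, ← mul_assoc]
      exact hx _
  · intro hg
    rw [← sum_single_mul_diag_diagSlice g]
    refine sum_mem fun γ _ => Ideal.mul_mem_left _ _ ?_
    rw [← Ideal.map_span]
    exact Ideal.mem_map_of_mem _ (hg γ)

end diagSlice

end MonoidAlgebra

attribute [local instance] Classical.propDecidable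

/-- `g = Σ λ_{α,β}(α,β)` lies in the left ideal of `ℤ[Γ²]` generated by `(1,1)+(S,S)` and
`(1,1)+(U,U)+(U²,U²)` iff for every `γ ∈ Γ`, the element `Σ_{βα⁻¹ = γ} λ_{α,β} α` of `ℤ[Γ]`
lies in the left ideal generated by `1+S` and `1+U+U²`. -/
theorem mem_ID_iff_diagonal_sums (g : MonoidAlgebra ℤ (PSL2Z × PSL2Z)) :
    g ∈ Ideal.span ({(1 : MonoidAlgebra ℤ (PSL2Z × PSL2Z)) +
          MonoidAlgebra.of ℤ (PSL2Z × PSL2Z) (pS, pS),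
        (1 : MonoidAlgebra ℤ (PSL2Z × PSL2Z)) + MonoidAlgebra.of ℤ (PSL2Z × PSL2Z) (pU, pU) +
          MonoidAlgebra.of ℤ (PSL2Z × PSL2Z) (pU ^ 2, pU ^ 2)} :
      Set (MonoidAlgebra ℤ (PSL2Z × PSL2Z))) ↔
    ∀ γ : PSL2Z,
      (Finsupp.sum g.coeff fun p n =>
          if p.2 * p.1⁻¹ = γ then (MonoidAlgebra.single p.1 n : MonoidAlgebra ℤ PSL2Z) else 0) ∈
        Ideal.span ({(1 : MonoidAlgebra ℤ PSL2Z) + MonoidAlgebra.of ℤ PSL2Z pS,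
            (1 : MonoidAlgebra ℤ PSL2Z) + MonoidAlgebra.of ℤ PSL2Z pU +
              MonoidAlgebra.of ℤ PSL2Z (pU ^ 2)} : Set (MonoidAlgebra ℤ PSL2Z)) := by
  have diag_generators : MonoidAlgebra.diag '' {(1 : MonoidAlgebra ℤ PSL2Z) +
        MonoidAlgebra.of ℤ PSL2Z pS,
      (1 : MonoidAlgebra ℤ PSL2Z) + MonoidAlgebra.of ℤ PSL2Z pU +
        MonoidAlgebra.of ℤ PSL2Z (pU ^ 2)} =
      {(1 : MonoidAlgebra ℤ (PSL2Z × PSL2Z)) + MonoidAlgebra.of ℤ (PSL2Z × PSL2Z) (pS, pS),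
        1 + MonoidAlgebra.of ℤ (PSL2Z × PSL2Z) (pU, pU) +
          MonoidAlgebra.of ℤ (PSL2Z × PSL2Z) (pU ^ 2, pU ^ 2)} := by
    simp [Set.image_pair, MonoidAlgebra.of_apply]
  rw [← diag_generators]
  exact MonoidAlgebra.mem_span_image_diag_iff _ g
end
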